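/- For 0 < c < π/8, ∫_0^∞ sinh(cz)⁴ / cosh(πz/2) dz = (1/8)·(1/cos(4c) − 4/cos(2c) + 3). -/

import Mathlib

open Real MeasureTheory Set

/-!
The substitution `x = sigmoid t` turns the Beta integral `B(u, 1 - u) = π / sin (π u)` into
`∫ exp (u t) / (1 + exp t) dt = π / sin (π u)` over `ℝ`; rescaling gives
`∫ exp (b z) / cosh (a z) dz = π / (a cos (π b / 2a))` for `|b| < a`, and averaging over `± b`
(the integrand is then even) gives the half-line integral of `cosh (b z) / cosh (a z)`.
Since `8 sinh⁴ x = cosh 4x - 4 cosh 2x + 3`, the integral in question is a combination of three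
such integrals with `a = π / 2` and `b = 4c, 2c, 0`, all admissible because `4c < π / 2`.
-/

theorem integral_Ioo_rpow_mul_one_sub_rpow_neg {u : ℝ} (hu0 : 0 < u) (hu1 : u < 1) :
    ∫ x in Ioo (0 : ℝ) 1, x ^ (u - 1) * (1 - x) ^ (-u) = π / sin (π * u) := by
  have hB : Complex.betaIntegral u (1 - u) = π / Complex.sin (π * u) := by
    rw [← Complex.Gamma_mul_Gamma_one_sub,
      Complex.Gamma_mul_Gamma_eq_betaIntegral (by simpa using hu0) (by simpa using hu1)]
    norm_num [Complex.Gamma_one]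
  have hreal : Complex.betaIntegral u (1 - u) =
      ↑(∫ x in Ioo (0 : ℝ) 1, x ^ (u - 1) * (1 - x) ^ (-u)) := by
    rw [Complex.betaIntegral, intervalIntegral.integral_of_le zero_le_one,
      integral_Ioc_eq_integral_Ioo, ← integral_complex_ofReal]
    refine setIntegral_congr_fun measurableSet_Ioo fun x hx => ?_
    rw [Complex.ofReal_mul, Complex.ofReal_cpow hx.1.le,
      Complex.ofReal_cpow (sub_nonneg.2 hx.2.le)]
    push_cast
    ring_nf
  rw [hreal] at hB
  exact_mod_cast hB

theorem abs_deriv_sigmoid_smul_rpow {u : ℝ} (t : ℝ) :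
    |sigmoid t * (1 - sigmoid t)| • (sigmoid t ^ (u - 1) * (1 - sigmoid t) ^ (-u)) =
      exp (u * t) / (1 + exp t) := by
  have hs0 := sigmoid_pos t
  set r := 1 - sigmoid t with hr_def
  have hr : r = (1 + exp t)⁻¹ := by rw [hr_def, ← sigmoid_neg, sigmoid_def, neg_neg]
  have hs : sigmoid t = exp t * r := by
    rw [hr_def, ← sigmoid_neg, ← sigmoid_mul_rexp_neg, mul_left_comm, ← exp_add, add_neg_cancel,
      exp_zero, mul_one]
  have hr0 : 0 < r := sub_pos.2 (sigmoid_lt_one t)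
  rw [smul_eq_mul, abs_of_pos (mul_pos hs0 hr0)]
  calc sigmoid t * r * (sigmoid t ^ (u - 1) * r ^ (-u))
      = sigmoid t ^ u * r ^ (1 - u) := by
        rw [rpow_sub hs0, rpow_sub hr0, rpow_neg hr0.le, rpow_one, rpow_one]
        field_simp
    _ = exp (u * t) * r := by
        rw [hs, mul_rpow (exp_pos t).le hr0.le, ← exp_mul, mul_assoc, ← rpow_add hr0,
          add_sub_cancel, rpow_one, mul_comm t]
    _ = exp (u * t) / (1 + exp t) := by rw [hr, div_eq_mul_inv]

theorem integral_exp_mul_div_one_add_exp {u : ℝ} (hu0 : 0 < u) (hu1 : u < 1) :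
    ∫ t, exp (u * t) / (1 + exp t) = π / sin (π * u) := by
  have key := integral_image_eq_integral_abs_deriv_smul MeasurableSet.univ
    (fun t _ => (hasDerivAt_sigmoid t).hasDerivWithinAt) sigmoid_injective.injOn
    (fun x => x ^ (u - 1) * (1 - x) ^ (-u))
  rw [image_univ, range_sigmoid, integral_Ioo_rpow_mul_one_sub_rpow_neg hu0 hu1,
    setIntegral_univ] at key
  simp only [abs_deriv_sigmoid_smul_rpow] at key
  exact key.symm

theorem exp_mul_div_cosh_eq {a : ℝ} (ha : a ≠ 0) (b z : ℝ) :
    exp (b * z) / cosh (a * z) =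
      2 * (exp ((a + b) / (2 * a) * (2 * a * z)) / (1 + exp (2 * a * z))) := by
  have h1 : (a + b) / (2 * a) * (2 * a * z) = a * z + b * z := by field_simp
  have h2 : exp (2 * a * z) = exp (a * z) * exp (a * z) := by rw [← exp_add]; ring_nf
  rw [h1, h2, exp_add, cosh_eq, exp_neg]
  field_simp
  ring

theorem integral_exp_mul_div_cosh {a b : ℝ} (ha : 0 < a) (hb : |b| < a) :
    ∫ z, exp (b * z) / cosh (a * z) = π / (a * cos (π * b / (2 * a))) := by
  obtain ⟨hb1, hb2⟩ := abs_lt.mp hb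
  have hu0 : 0 < (a + b) / (2 * a) := by apply div_pos <;> linarith
  have hu1 : (a + b) / (2 * a) < 1 := by rw [div_lt_one (by positivity)]; linarith
  simp_rw [exp_mul_div_cosh_eq ha.ne' b]
  rw [integral_const_mul,
    Measure.integral_comp_mul_left (fun t => exp ((a + b) / (2 * a) * t) / (1 + exp t)),
    integral_exp_mul_div_one_add_exp hu0 hu1, abs_of_pos (by positivity), smul_eq_mul,
    show π * ((a + b) / (2 * a)) = π * b / (2 * a) + π / 2 by field_simp; ring, sin_add_pi_div_two]
  field_simp

theorem cos_pi_mul_div_two_mul_pos {a b : ℝ} (ha : 0 < a) (hb : |b| < a) :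
    0 < cos (π * b / (2 * a)) := by
  obtain ⟨hb1, hb2⟩ := abs_lt.mp hb
  apply cos_pos_of_mem_Ioo
  constructor
  · rw [lt_div_iff₀ (by positivity)]; nlinarith [pi_pos]
  · rw [div_lt_iff₀ (by positivity)]; nlinarith [pi_pos]

theorem integrable_exp_mul_div_cosh {a b : ℝ} (ha : 0 < a) (hb : |b| < a) :
    Integrable fun z => exp (b * z) / cosh (a * z) := by
  -- a non-integrable function has Bochner integral `0`
  refine .of_integral_ne_zero ?_
  rw [integral_exp_mul_div_cosh ha hb]
  have := cos_pi_mul_div_two_mul_pos ha hb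
  positivity

theorem cosh_mul_div_cosh_eq (a b z : ℝ) :
    cosh (b * z) / cosh (a * z) =
      (exp (b * z) / cosh (a * z) + exp (-b * z) / cosh (a * z)) / 2 := by
  rw [cosh_eq, neg_mul]
  ring

theorem integrable_cosh_mul_div_cosh {a b : ℝ} (ha : 0 < a) (hb : |b| < a) :
    Integrable fun z => cosh (b * z) / cosh (a * z) := by
  simp_rw [cosh_mul_div_cosh_eq a b]
  exact ((integrable_exp_mul_div_cosh ha hb).add
    (integrable_exp_mul_div_cosh ha (by rwa [abs_neg]))).div_const 2

theorem integral_Ioi_cosh_mul_div_cosh {a b : ℝ} (ha : 0 < a) (hb : |b| < a) :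
    ∫ z in Ioi 0, cosh (b * z) / cosh (a * z) = π / (2 * a * cos (π * b / (2 * a))) := by
  have heven : ∀ z, cosh (b * |z|) / cosh (a * |z|) = cosh (b * z) / cosh (a * z) := by
    intro z
    rcases abs_choice z with h | h <;> simp [h]
  have hR : ∫ z, cosh (b * z) / cosh (a * z) = π / (a * cos (π * b / (2 * a))) := by
    simp_rw [cosh_mul_div_cosh_eq a b]
    rw [integral_div, integral_add (integrable_exp_mul_div_cosh ha hb)
      (integrable_exp_mul_div_cosh ha (by rwa [abs_neg])), integral_exp_mul_div_cosh ha hb,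
      integral_exp_mul_div_cosh ha (by rwa [abs_neg]), mul_neg, neg_div, cos_neg]
    ring
  have h2 := integral_comp_abs (f := fun z => cosh (b * z) / cosh (a * z))
  simp only [heven, hR] at h2
  rw [show π / (2 * a * cos (π * b / (2 * a))) = π / (a * cos (π * b / (2 * a))) / 2 by ring,
    h2]
  ring

theorem integral_Ioi_cosh_mul_div_cosh_pi_div_two {b : ℝ} (hb : |b| < π / 2) :
    ∫ z in Ioi 0, cosh (b * z) / cosh (π / 2 * z) = 1 / cos b := by
  rw [integral_Ioi_cosh_mul_div_cosh (by positivity) hb]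
  field_simp

theorem sinh_pow_four (x : ℝ) :
    sinh x ^ 4 = (cosh (4 * x) - 4 * cosh (2 * x) + 3) / 8 := by
  have h2 : cosh (2 * x) = 2 * sinh x ^ 2 + 1 := by
    rw [cosh_two_mul, cosh_sq]; ring
  have h4 : cosh (4 * x) = 2 * cosh (2 * x) ^ 2 - 1 := by
    rw [show 4 * x = 2 * (2 * x) by ring, cosh_two_mul, sinh_sq]; ring
  rw [h4, h2]; ring

theorem stmt_7 (c : ℝ) (hc : 0 < c) (hc' : c < π / 8) :
    ∫ z in Set.Ioi (0 : ℝ), (Real.sinh (c * z)) ^ 4 / Real.cosh (π * z / 2) =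
      (1 / 8) * (1 / Real.cos (4 * c) - 4 / Real.cos (2 * c) + 3) := by
  set g : ℝ → ℝ → ℝ := fun b z => cosh (b * z) / cosh (π / 2 * z) with hg
  have hb : ∀ k ∈ Icc (0 : ℝ) 4, |k * c| < π / 2 := fun k ⟨hk0, hk4⟩ => by
    rw [abs_of_nonneg (by positivity)]
    nlinarith
  have hg_int (k : ℝ) (hk : k ∈ Icc (0 : ℝ) 4) : IntegrableOn (g (k * c)) (Ioi 0) :=
    (integrable_cosh_mul_div_cosh (by positivity) (hb k hk)).integrableOn
  have hg_integral (k : ℝ) (hk : k ∈ Icc (0 : ℝ) 4) :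
      ∫ z in Ioi 0, g (k * c) z = 1 / cos (k * c) :=
    integral_Ioi_cosh_mul_div_cosh_pi_div_two (hb k hk)
  have hpt : ∀ z, sinh (c * z) ^ 4 / cosh (π * z / 2) =
      (g (4 * c) z - 4 * g (2 * c) z + 3 * g (0 * c) z) / 8 := by
    intro z
    simp only [hg, sinh_pow_four, zero_mul, cosh_zero]
    ring_nf
  have h4 := hg_int 4 (by norm_num)
  have h2 := hg_int 2 (by norm_num)
  have h0 := hg_int 0 (by norm_num)
  have h42 : IntegrableOn (fun z => g (4 * c) z - 4 * g (2 * c) z) (Ioi 0) :=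
    h4.sub (h2.const_mul 4)
  simp_rw [hpt]
  rw [integral_div, integral_add h42 (h0.const_mul 3),
    integral_sub h4 (h2.const_mul 4), integral_const_mul, integral_const_mul,
    hg_integral 4 (by norm_num), hg_integral 2 (by norm_num), hg_integral 0 (by norm_num),
    zero_mul, cos_zero]
  ring
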